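/- arXiv:1105.5285 — 3 statements merged into one kernel-verified Lean document; each statement's English description precedes it below -/
import Mathlib

section
/- For any f, g ∈ H, define u₁(t) = e^{t−a} · (i f + g)/√2 for t ≤ a and u₂(t) = e^{b−t} · (i f − g)/√2 for t ≥ b. Then u₁ and its derivative belong to L²((-∞, a]; H), u₂ and its derivative belong to L²([b, +∞); H), and the boundary maps γ₁(u) = (1/(i√2))(u₁(a) + u₂(b)), γ₂(u) = (1/√2)(u₁(a) − u₂(b)) satisfy γ₁(u) = f and γ₂(u) = g. In particular, the pair map u ↦ (γ₁(u), γ₂(u)) is surjective onto H × H (the surjectivity part of Theorem 2.1). -/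
/-!
Both `u₁` and `u₂` are multiples of an exponential decaying away from the endpoint, so they are
square integrable, and so are their derivatives `u₁' = u₁`, `u₂' = -u₂`. Their endpoint values
`(i f ± g)/√2` have sum `√2 i f` and difference `√2 g`, which `γ₁` and `γ₂` rescale to `f` and `g`.
-/

open MeasureTheory Set Complex
open scoped InnerProductSpace

/-- First boundary map: `γ₁(u) = (1/(i√2)) (u₁(a) + u₂(b))`. -/
noncomputable def gamma1 {H : Type*} [NormedAddCommGroup H] [InnerProductSpace ℂ H]
    (a b : ℝ) (u₁ u₂ : ℝ → H) : H :=
  (Complex.I * (Real.sqrt 2 : ℂ))⁻¹ • (u₁ a + u₂ b)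

/-- Second boundary map: `γ₂(u) = (1/√2) (u₁(a) − u₂(b))`. -/
noncomputable def gamma2 {H : Type*} [NormedAddCommGroup H] [InnerProductSpace ℂ H]
    (a b : ℝ) (u₁ u₂ : ℝ → H) : H :=
  ((Real.sqrt 2 : ℂ))⁻¹ • (u₁ a - u₂ b)

lemma memLp_two_exp_sub_Iic (a : ℝ) :
    MemLp (fun t => Real.exp (t - a)) 2 (volume.restrict (Iic a)) := by
  have hmeas : AEStronglyMeasurable (fun t => Real.exp (t - a)) (volume.restrict (Iic a)) :=
    (by fun_prop : Continuous fun t => Real.exp (t - a)).aestronglyMeasurable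
  refine (memLp_two_iff_integrable_sq hmeas).2 ?_
  refine ((integrableOn_exp_mul_Iic two_pos a).mul_const (Real.exp (-2 * a))).congr
    (ae_of_all _ fun t => ?_)
  simp only [← Real.exp_add, ← Real.exp_nat_mul]
  ring_nf

lemma memLp_two_exp_sub_Ici (b : ℝ) :
    MemLp (fun t => Real.exp (b - t)) 2 (volume.restrict (Ici b)) := by
  have hmeas : AEStronglyMeasurable (fun t => Real.exp (b - t)) (volume.restrict (Ici b)) :=
    (by fun_prop : Continuous fun t => Real.exp (b - t)).aestronglyMeasurable
  refine (memLp_two_iff_integrable_sq hmeas).2 ?_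
  refine (integrableOn_Ici_iff_integrableOn_Ioi (by simp)).2 ?_
  refine ((integrableOn_exp_mul_Ioi (by norm_num : (-2 : ℝ) < 0) b).mul_const
    (Real.exp (2 * b))).congr (ae_of_all _ fun t => ?_)
  simp only [← Real.exp_add, ← Real.exp_nat_mul]
  ring_nf

theorem MeasureTheory.MemLp.smul_const {α 𝕜 E : Type*} {m : MeasurableSpace α} {μ : Measure α}
    [NormedRing 𝕜] [NormedAddCommGroup E] [MulActionWithZero 𝕜 E] [IsBoundedSMul 𝕜 E]
    {p : ENNReal} {φ : α → 𝕜} (hφ : MemLp φ p μ) (v : E) :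
    MemLp (fun x => φ x • v) p μ :=
  (memLp_top_const v).smul hφ

section
variable {E : Type*} [NormedAddCommGroup E] [NormedSpace ℝ E]

lemma deriv_exp_sub_const_smul (a : ℝ) (v : E) :
    deriv (fun t => Real.exp (t - a) • v) = fun t => Real.exp (t - a) • v := by
  funext t
  have h := ((Real.hasDerivAt_exp (t - a)).comp t ((hasDerivAt_id t).sub_const a)).smul_const v
  simpa [Function.comp_def] using h.deriv

lemma deriv_exp_const_sub_smul (b : ℝ) (v : E) :
    deriv (fun t => Real.exp (b - t) • v) = fun t => -(Real.exp (b - t) • v) := by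
  funext t
  have h := ((Real.hasDerivAt_exp (b - t)).comp t ((hasDerivAt_id t).const_sub b)).smul_const v
  simpa [Function.comp_def] using h.deriv

end

section
variable {H : Type*} [NormedAddCommGroup H] [InnerProductSpace ℂ H]

noncomputable def boundaryLift₁ (a : ℝ) (f g : H) : ℝ → H :=
  fun t => Real.exp (t - a) • ((Real.sqrt 2 : ℂ))⁻¹ • (Complex.I • f + g)

noncomputable def boundaryLift₂ (b : ℝ) (f g : H) : ℝ → H :=
  fun t => Real.exp (b - t) • ((Real.sqrt 2 : ℂ))⁻¹ • (Complex.I • f - g)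

lemma ofReal_sqrt_two_mul_self : (Real.sqrt 2 : ℂ) * (Real.sqrt 2 : ℂ) = 2 := by
  norm_cast
  exact Real.mul_self_sqrt zero_le_two

lemma ofReal_sqrt_two_ne_zero : (Real.sqrt 2 : ℂ) ≠ 0 := by
  exact_mod_cast (Real.sqrt_pos.2 two_pos).ne'

lemma gamma1_boundaryLift (a b : ℝ) (f g : H) :
    gamma1 a b (boundaryLift₁ a f g) (boundaryLift₂ b f g) = f := by
  have hsqrt := ofReal_sqrt_two_ne_zero
  simp only [gamma1, boundaryLift₁, boundaryLift₂, sub_self, Real.exp_zero, one_smul]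
  match_scalars <;> field_simp
  · linear_combination -ofReal_sqrt_two_mul_self
  · ring

lemma gamma2_boundaryLift (a b : ℝ) (f g : H) :
    gamma2 a b (boundaryLift₁ a f g) (boundaryLift₂ b f g) = g := by
  have hsqrt := ofReal_sqrt_two_ne_zero
  simp only [gamma2, boundaryLift₁, boundaryLift₂, sub_self, Real.exp_zero, one_smul]
  match_scalars <;> field_simp
  · ring
  · linear_combination -ofReal_sqrt_two_mul_self

lemma deriv_boundaryLift₁ (a : ℝ) (f g : H) :
    deriv (boundaryLift₁ a f g) = boundaryLift₁ a f g :=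
  deriv_exp_sub_const_smul a _

lemma deriv_boundaryLift₂ (b : ℝ) (f g : H) :
    deriv (boundaryLift₂ b f g) = -boundaryLift₂ b f g :=
  deriv_exp_const_sub_smul b _

lemma boundaryLift_spec (a b : ℝ) (f g : H) :
    MemLp (boundaryLift₁ a f g) 2 (volume.restrict (Iic a))
    ∧ MemLp (deriv (boundaryLift₁ a f g)) 2 (volume.restrict (Iic a))
    ∧ MemLp (boundaryLift₂ b f g) 2 (volume.restrict (Ici b))
    ∧ MemLp (deriv (boundaryLift₂ b f g)) 2 (volume.restrict (Ici b))
    ∧ gamma1 a b (boundaryLift₁ a f g) (boundaryLift₂ b f g) = f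
    ∧ gamma2 a b (boundaryLift₁ a f g) (boundaryLift₂ b f g) = g := by
  have h₁ : MemLp (boundaryLift₁ a f g) 2 (volume.restrict (Iic a)) :=
    (memLp_two_exp_sub_Iic a).smul_const _
  have h₂ : MemLp (boundaryLift₂ b f g) 2 (volume.restrict (Ici b)) :=
    (memLp_two_exp_sub_Ici b).smul_const _
  rw [deriv_boundaryLift₁, deriv_boundaryLift₂]
  exact ⟨h₁, h₁, h₂, h₂.neg, gamma1_boundaryLift a b f g, gamma2_boundaryLift a b f g⟩

end

theorem boundary_maps_surjective_general
    {H : Type*} [NormedAddCommGroup H] [InnerProductSpace ℂ H]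
    (a b : ℝ) (f g : H)
    (u₁ u₂ : ℝ → H)
    (hu₁def : u₁ = fun t => Real.exp (t - a) • ((Real.sqrt 2 : ℂ))⁻¹ • (Complex.I • f + g))
    (hu₂def : u₂ = fun t => Real.exp (b - t) • ((Real.sqrt 2 : ℂ))⁻¹ • (Complex.I • f - g)) :
    MemLp u₁ 2 (volume.restrict (Set.Iic a))
    ∧ MemLp (deriv u₁) 2 (volume.restrict (Set.Iic a))
    ∧ MemLp u₂ 2 (volume.restrict (Set.Ici b))
    ∧ MemLp (deriv u₂) 2 (volume.restrict (Set.Ici b))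
    ∧ gamma1 a b u₁ u₂ = f ∧ gamma2 a b u₁ u₂ = g
    ∧ (∀ F₁ F₂ : H, ∃ w₁ w₂ : ℝ → H,
        MemLp w₁ 2 (volume.restrict (Set.Iic a))
        ∧ MemLp (deriv w₁) 2 (volume.restrict (Set.Iic a))
        ∧ MemLp w₂ 2 (volume.restrict (Set.Ici b))
        ∧ MemLp (deriv w₂) 2 (volume.restrict (Set.Ici b))
        ∧ gamma1 a b w₁ w₂ = F₁ ∧ gamma2 a b w₁ w₂ = F₂) := by
  obtain ⟨h₁, h₂, h₃, h₄, h₅, h₆⟩ := boundaryLift_spec a b f g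
  subst hu₁def hu₂def
  exact ⟨h₁, h₂, h₃, h₄, h₅, h₆, fun F₁ F₂ => ⟨_, _, boundaryLift_spec a b F₁ F₂⟩⟩

/-- Surjectivity part of Theorem 2.1: for any `f, g ∈ H` the explicit functions
`u₁(t) = e^{t−a} (i f + g)/√2` and `u₂(t) = e^{b−t} (i f − g)/√2` lie (with their
derivatives) in the corresponding `L²` spaces and realize the boundary values
`γ₁(u) = f`, `γ₂(u) = g`; in particular `u ↦ (γ₁(u), γ₂(u))` is onto `H × H`. -/
theorem boundary_maps_surjective
    {H : Type*} [NormedAddCommGroup H] [InnerProductSpace ℂ H] [CompleteSpace H]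
    (a b : ℝ) (hab : a < b) (f g : H)
    (u₁ u₂ : ℝ → H)
    (hu₁def : u₁ = fun t => Real.exp (t - a) • ((Real.sqrt 2 : ℂ))⁻¹ • (Complex.I • f + g))
    (hu₂def : u₂ = fun t => Real.exp (b - t) • ((Real.sqrt 2 : ℂ))⁻¹ • (Complex.I • f - g)) :
    MemLp u₁ 2 (volume.restrict (Set.Iic a))
    ∧ MemLp (deriv u₁) 2 (volume.restrict (Set.Iic a))
    ∧ MemLp u₂ 2 (volume.restrict (Set.Ici b))
    ∧ MemLp (deriv u₂) 2 (volume.restrict (Set.Ici b))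
    ∧ gamma1 a b u₁ u₂ = f ∧ gamma2 a b u₁ u₂ = g
    ∧ (∀ F₁ F₂ : H, ∃ w₁ w₂ : ℝ → H,
        MemLp w₁ 2 (volume.restrict (Set.Iic a))
        ∧ MemLp (deriv w₁) 2 (volume.restrict (Set.Iic a))
        ∧ MemLp w₂ 2 (volume.restrict (Set.Ici b))
        ∧ MemLp (deriv w₂) 2 (volume.restrict (Set.Ici b))
        ∧ gamma1 a b w₁ w₂ = F₁ ∧ gamma2 a b w₁ w₂ = F₂) :=
  boundary_maps_surjective_general a b f g u₁ u₂ hu₁def hu₂def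
end

section
/- (Theorem 3.1, bounded-coefficient form.) Let W : H → H be a unitary operator and λ ∈ ℝ. Suppose u₁ : ℝ → H is differentiable on (-∞, a] with i u₁'(t) + A u₁(t) = λ u₁(t) for all t ≤ a, u₂ : ℝ → H is differentiable on [b, +∞) with i u₂'(t) + A u₂(t) = λ u₂(t) for all t ≥ b, u₁ ∈ L²((-∞, a]; H), u₂ ∈ L²([b, +∞); H), and u₂(b) = W u₁(a). Then u₁(t) = 0 for all t ≤ a and u₂(t) = 0 for all t ≥ b; i.e., the boundary value problem has no nonzero L² eigenfunctions for any real λ. -/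
open MeasureTheory Set Complex
open scoped InnerProductSpace

/-!
Since `A` is selfadjoint and `λ` is real, `i u' + A u = λ u` forces
`d/dt ⟪u, u⟫ = ⟪u, u'⟫ + ⟪u', u⟫ = 0`, so every solution has constant norm on its half-line.
A function of constant norm on `(-∞, a]` is square-integrable only if it vanishes; hence
`u₁ = 0`, so `u₂ b = W 0 = 0`, and conservation of norm gives `u₂ = 0`.
-/

section

variable {H : Type*} [NormedAddCommGroup H] [InnerProductSpace ℂ H] [CompleteSpace H]
  {A : H →L[ℂ] H} {lam : ℝ}

theorem inner_add_inner_eq_zero_of_I_smul_add_apply_eq (hA : IsSelfAdjoint A) {v w : H}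
    (h : I • w + A v = (lam : ℂ) • v) : ⟪v, w⟫_ℂ + ⟪w, v⟫_ℂ = 0 := by
  -- Pair the equation with `v` on either side; the `λ`-terms agree as `λ` is real.
  have h₁ := congrArg (fun z => ⟪v, z⟫_ℂ) h
  have h₂ := congrArg (fun z => ⟪z, v⟫_ℂ) h
  simp only [inner_add_left, inner_add_right, inner_smul_left, inner_smul_right, conj_I,
    conj_ofReal] at h₁ h₂
  have hsym : ⟪A v, v⟫_ℂ = ⟪v, A v⟫_ℂ := hA.isSymmetric v v
  linear_combination (-I) * (h₁ - h₂) - I * hsym + (⟪v, w⟫_ℂ + ⟪w, v⟫_ℂ) * I_sq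

theorem norm_eq_of_hasDerivWithinAt_of_I_smul_add_apply_eq (hA : IsSelfAdjoint A)
    {u u' : ℝ → H} {s : Set ℝ} (hs : Convex ℝ s)
    (hd : ∀ t ∈ s, HasDerivWithinAt u (u' t) s t)
    (heq : ∀ t ∈ s, I • u' t + A (u t) = (lam : ℂ) • u t) {x y : ℝ} (hx : x ∈ s) (hy : y ∈ s) :
    ‖u x‖ = ‖u y‖ := by
  have hderiv : ∀ t ∈ s, HasDerivWithinAt (fun t => ⟪u t, u t⟫_ℂ) 0 s t := fun t ht => by
    simpa [inner_add_inner_eq_zero_of_I_smul_add_apply_eq hA (heq t ht)] using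
      (hd t ht).inner ℂ (hd t ht)
  have hinner : ⟪u y, u y⟫_ℂ = ⟪u x, u x⟫_ℂ := by
    simpa [sub_eq_zero] using
      hs.norm_image_sub_le_of_norm_hasDerivWithin_le hderiv (fun _ _ => norm_zero.le) hx hy
  rw [← sq_eq_sq₀ (norm_nonneg _) (norm_nonneg _), @norm_sq_eq_re_inner ℂ,
    @norm_sq_eq_re_inner ℂ, hinner]

end

theorem eq_zero_of_memLp_of_norm_ae_eq {α E : Type*} [MeasurableSpace α] {μ : Measure α}
    [NormedAddCommGroup E] {p : ENNReal} (hp₀ : p ≠ 0) (hp : p ≠ ⊤) (hμ : μ univ = ⊤)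
    {f : α → E} (hf : MemLp f p μ) {x : E} (hnorm : ∀ᵐ t ∂μ, ‖f t‖ = ‖x‖) : x = 0 := by
  have hconst : MemLp (fun _ => ‖x‖) p μ := hf.norm.ae_eq hnorm
  simpa [memLp_const_iff hp₀ hp, hμ] using hconst

theorem pointSpectrum_empty_general
    {H : Type*} [NormedAddCommGroup H] [InnerProductSpace ℂ H] [CompleteSpace H]
    (A : H →L[ℂ] H) (hA : IsSelfAdjoint A) (a b : ℝ)
    (W : H →L[ℂ] H)
    (lam : ℝ) (u₁ u₁' u₂ u₂' : ℝ → H)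
    (hu₁deriv : ∀ t ∈ Set.Iic a, HasDerivWithinAt u₁ (u₁' t) (Set.Iic a) t)
    (hu₁eq : ∀ t ∈ Set.Iic a, Complex.I • u₁' t + A (u₁ t) = (lam : ℂ) • u₁ t)
    (hu₂deriv : ∀ t ∈ Set.Ici b, HasDerivWithinAt u₂ (u₂' t) (Set.Ici b) t)
    (hu₂eq : ∀ t ∈ Set.Ici b, Complex.I • u₂' t + A (u₂ t) = (lam : ℂ) • u₂ t)
    (hu₁L2 : MemLp u₁ 2 (volume.restrict (Set.Iic a)))
    (hbc : u₂ b = W (u₁ a)) :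
    (∀ t ∈ Set.Iic a, u₁ t = 0) ∧ (∀ t ∈ Set.Ici b, u₂ t = 0) := by
  have hnorm₁ : ∀ t ∈ Iic a, ‖u₁ t‖ = ‖u₁ a‖ := fun t ht =>
    norm_eq_of_hasDerivWithinAt_of_I_smul_add_apply_eq hA (convex_Iic a) hu₁deriv hu₁eq ht
      (mem_Iic.2 le_rfl)
  have hnorm₂ : ∀ t ∈ Ici b, ‖u₂ t‖ = ‖u₂ b‖ := fun t ht =>
    norm_eq_of_hasDerivWithinAt_of_I_smul_add_apply_eq hA (convex_Ici b) hu₂deriv hu₂eq ht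
      (mem_Ici.2 le_rfl)
  have hu₁a : u₁ a = 0 :=
    eq_zero_of_memLp_of_norm_ae_eq two_ne_zero ENNReal.ofNat_ne_top
      (by simp [Real.volume_Iic]) hu₁L2 (ae_restrict_of_forall_mem measurableSet_Iic hnorm₁)
  have hu₂b : u₂ b = 0 := by rw [hbc, hu₁a, map_zero]
  exact ⟨fun t ht => norm_eq_zero.1 (by rw [hnorm₁ t ht, hu₁a, norm_zero]),
    fun t ht => norm_eq_zero.1 (by rw [hnorm₂ t ht, hu₂b, norm_zero])⟩

/-- Theorem 3.1 (bounded-coefficient form): for a unitary `W` and real `λ`, the boundary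
value problem `i u' + A u = λ u` on `(-∞, a] ∪ [b, +∞)` with `u₂(b) = W u₁(a)` has no
nonzero `L²` eigenfunctions. -/
theorem pointSpectrum_empty
    {H : Type*} [NormedAddCommGroup H] [InnerProductSpace ℂ H] [CompleteSpace H]
    (A : H →L[ℂ] H) (hA : IsSelfAdjoint A) (a b : ℝ) (hab : a < b)
    (W : H →L[ℂ] H) (hWiso : ∀ x : H, ‖W x‖ = ‖x‖) (hWsurj : Function.Surjective W)
    (lam : ℝ) (u₁ u₁' u₂ u₂' : ℝ → H)
    (hu₁deriv : ∀ t ∈ Set.Iic a, HasDerivWithinAt u₁ (u₁' t) (Set.Iic a) t)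
    (hu₁eq : ∀ t ∈ Set.Iic a, Complex.I • u₁' t + A (u₁ t) = (lam : ℂ) • u₁ t)
    (hu₂deriv : ∀ t ∈ Set.Ici b, HasDerivWithinAt u₂ (u₂' t) (Set.Ici b) t)
    (hu₂eq : ∀ t ∈ Set.Ici b, Complex.I • u₂' t + A (u₂ t) = (lam : ℂ) • u₂ t)
    (hu₁L2 : MemLp u₁ 2 (volume.restrict (Set.Iic a)))
    (hu₂L2 : MemLp u₂ 2 (volume.restrict (Set.Ici b)))
    (hbc : u₂ b = W (u₁ a)) :
    (∀ t ∈ Set.Iic a, u₁ t = 0) ∧ (∀ t ∈ Set.Ici b, u₂ t = 0) :=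
  pointSpectrum_empty_general A hA a b W lam u₁ u₁' u₂ u₂' hu₁deriv hu₁eq hu₂deriv hu₂eq hu₁L2 hbc
end

section
/- Let λ ∈ ℂ with λ_i = Im λ > 0, and let f ∈ L²([b, +∞); H). Then the function s ↦ e^{−iλ(b−s)} · exp(i(b−s)A) f(s) is Bochner integrable on (b, +∞), and ‖ ∫_b^{∞} e^{−iλ(b−s)} exp(i(b−s)A) f(s) ds ‖² ≤ (1/(2λ_i)) ∫_b^{∞} ‖f(s)‖² ds. -/
/-!
Since `exp(iτA)` is unitary, the integrand has norm `e^{Im λ (b - s)} ‖f(s)‖`. The weight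
`s ↦ e^{Im λ (b - s)}` lies in `L²(b, ∞)` with squared norm `1 / (2 Im λ)`, so the Cauchy–Schwarz
inequality gives both the integrability of the integrand and the bound.
-/

open MeasureTheory Set Complex
open scoped InnerProductSpace

/-- The operator exponential `exp(iτA)` for a bounded operator `A` and `τ ∈ ℝ`. -/
noncomputable def expIA {H : Type*} [NormedAddCommGroup H] [InnerProductSpace ℂ H]
    [CompleteSpace H] (A : H →L[ℂ] H) (τ : ℝ) : H →L[ℂ] H :=
  NormedSpace.exp ((Complex.I * (τ : ℂ)) • A)

section CauchySchwarz

variable {α E : Type*} [MeasurableSpace α] {μ : Measure α} [NormedAddCommGroup E]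

theorem sq_integral_norm_mul_norm_le {u v : α → E} (hu : MemLp u 2 μ) (hv : MemLp v 2 μ) :
    (∫ a, ‖u a‖ * ‖v a‖ ∂μ) ^ 2 ≤ (∫ a, ‖u a‖ ^ 2 ∂μ) * ∫ a, ‖v a‖ ^ 2 ∂μ := by
  have hofReal : ENNReal.ofReal 2 = 2 := by norm_num
  have hHolder := integral_mul_norm_le_Lp_mul_Lq Real.HolderConjugate.two_two
    (hofReal ▸ hu) (hofReal ▸ hv)
  simp only [Real.rpow_two, ← Real.sqrt_eq_rpow] at hHolder
  calc (∫ a, ‖u a‖ * ‖v a‖ ∂μ) ^ 2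
      ≤ (√(∫ a, ‖u a‖ ^ 2 ∂μ) * √(∫ a, ‖v a‖ ^ 2 ∂μ)) ^ 2 :=
        pow_le_pow_left₀ (integral_nonneg fun a => by positivity) hHolder 2
    _ = (∫ a, ‖u a‖ ^ 2 ∂μ) * ∫ a, ‖v a‖ ^ 2 ∂μ := by
        rw [mul_pow, Real.sq_sqrt (integral_nonneg fun a => by positivity),
          Real.sq_sqrt (integral_nonneg fun a => by positivity)]

theorem integrable_and_sq_norm_integral_le_of_norm_le_mul [NormedSpace ℝ E] {F : α → E}
    {u v : α → ℝ} (hF : AEStronglyMeasurable F μ) (hu : MemLp u 2 μ) (hv : MemLp v 2 μ)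
    (hle : ∀ᵐ a ∂μ, ‖F a‖ ≤ u a * v a) :
    Integrable F μ ∧ ‖∫ a, F a ∂μ‖ ^ 2 ≤ (∫ a, u a ^ 2 ∂μ) * ∫ a, v a ^ 2 ∂μ := by
  have hle' : ∀ᵐ a ∂μ, ‖F a‖ ≤ ‖u a‖ * ‖v a‖ := hle.mono fun a ha =>
    ha.trans ((le_abs_self _).trans_eq (abs_mul _ _))
  have huv : Integrable (fun a => ‖u a‖ * ‖v a‖) μ := hu.norm.integrable_mul hv.norm
  refine ⟨huv.mono' hF hle', ?_⟩
  calc ‖∫ a, F a ∂μ‖ ^ 2 ≤ (∫ a, ‖u a‖ * ‖v a‖ ∂μ) ^ 2 := by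
        gcongr
        exact norm_integral_le_of_norm_le huv hle'
    _ ≤ (∫ a, ‖u a‖ ^ 2 ∂μ) * ∫ a, ‖v a‖ ^ 2 ∂μ := sq_integral_norm_mul_norm_le hu hv
    _ = (∫ a, u a ^ 2 ∂μ) * ∫ a, v a ^ 2 ∂μ := by simp only [Real.norm_eq_abs, sq_abs]

end CauchySchwarz

section ExponentialWeight

variable {a : ℝ}

theorem integral_exp_mul_sub_Ioi (ha : 0 < a) (b : ℝ) :
    ∫ s in Ioi b, Real.exp (a * (b - s)) = 1 / a := by
  have hsplit : ∀ s, Real.exp (a * (b - s)) = Real.exp (a * b) * Real.exp (-a * s) := by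
    intro s; rw [← Real.exp_add]; ring_nf
  rw [integral_congr_ae (ae_of_all _ hsplit), integral_const_mul,
    integral_exp_mul_Ioi (neg_lt_zero.2 ha), neg_div_neg_eq, mul_div_assoc', ← Real.exp_add,
    neg_mul, add_neg_cancel, Real.exp_zero]

theorem integral_exp_mul_sub_sq_Ioi (ha : 0 < a) (b : ℝ) :
    ∫ s in Ioi b, Real.exp (a * (b - s)) ^ 2 = 1 / (2 * a) := by
  have hsq : ∀ s, Real.exp (a * (b - s)) ^ 2 = Real.exp (2 * a * (b - s)) := by
    intro s; rw [sq, ← Real.exp_add]; ring_nf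
  simp only [hsq]
  exact integral_exp_mul_sub_Ioi (by positivity) b

theorem memLp_two_exp_mul_sub_Ioi (ha : 0 < a) (b : ℝ) :
    MemLp (fun s => Real.exp (a * (b - s))) 2 (volume.restrict (Ioi b)) := by
  refine (memLp_two_iff_integrable_sq (by fun_prop)).2 (Integrable.of_integral_ne_zero ?_)
  rw [integral_exp_mul_sub_sq_Ioi ha]
  positivity

theorem norm_exp_neg_I_mul_sub (lam : ℂ) (b s : ℝ) :
    ‖Complex.exp (-Complex.I * lam * ((b : ℂ) - (s : ℂ)))‖ = Real.exp (lam.im * (b - s)) := by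
  rw [Complex.norm_exp]
  congr 1
  simp [Complex.mul_re]

end ExponentialWeight

section expIA

variable {H : Type*} [NormedAddCommGroup H] [InnerProductSpace ℂ H] [CompleteSpace H]
  {A : H →L[ℂ] H}

theorem expIA_eq_exp_smul (A : H →L[ℂ] H) (τ : ℝ) :
    expIA A τ = NormedSpace.exp ((τ : ℂ) • (I • A)) := by
  rw [expIA, smul_smul, mul_comm]

theorem continuous_expIA (A : H →L[ℂ] H) : Continuous (expIA A) := by
  simp only [continuous_iff_continuousAt, funext (expIA_eq_exp_smul A)]
  exact fun τ => (hasDerivAt_exp_smul_const (I • A) (τ : ℂ)).continuousAt.comp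
    continuous_ofReal.continuousAt

theorem IsSelfAdjoint.expIA_mem_unitary (hA : IsSelfAdjoint A) (τ : ℝ) :
    expIA A τ ∈ unitary (H →L[ℂ] H) := by
  have hτA : IsSelfAdjoint ((τ : ℂ) • A) := IsSelfAdjoint.smul (Complex.conj_ofReal τ) hA
  rw [expIA, ← smul_smul]
  exact (selfAdjoint.expUnitary ⟨_, hτA⟩).prop

theorem IsSelfAdjoint.norm_expIA_apply (hA : IsSelfAdjoint A) (τ : ℝ) (x : H) :
    ‖expIA A τ x‖ = ‖x‖ :=
  ContinuousLinearMap.norm_map_of_mem_unitary (hA.expIA_mem_unitary τ) x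

end expIA

/-- For `Im λ > 0` and `f ∈ L²([b,∞); H)`, the function
`s ↦ e^{−iλ(b−s)} exp(i(b−s)A) f(s)` is Bochner integrable on `(b, ∞)` and
`‖∫_b^∞ e^{−iλ(b−s)} exp(i(b−s)A) f(s) ds‖² ≤ (1/(2 Im λ)) ∫_b^∞ ‖f(s)‖² ds`. -/
theorem integral_bound_right_halfline
    {H : Type*} [NormedAddCommGroup H] [InnerProductSpace ℂ H] [CompleteSpace H]
    (A : H →L[ℂ] H) (hA : IsSelfAdjoint A) (b : ℝ) (lam : ℂ) (hlam : 0 < lam.im)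
    (f : ℝ → H) (hf : MemLp f 2 (volume.restrict (Set.Ici b))) :
    IntegrableOn
      (fun s : ℝ => Complex.exp (-Complex.I * lam * ((b : ℂ) - (s : ℂ))) •
        (expIA A (b - s)) (f s)) (Set.Ioi b) volume
    ∧ ‖∫ s in Set.Ioi b, Complex.exp (-Complex.I * lam * ((b : ℂ) - (s : ℂ))) •
          (expIA A (b - s)) (f s)‖ ^ 2
        ≤ (1 / (2 * lam.im)) * ∫ s in Set.Ioi b, ‖f s‖ ^ 2 := by
  set F : ℝ → H := fun s => Complex.exp (-Complex.I * lam * ((b : ℂ) - (s : ℂ))) •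
    (expIA A (b - s)) (f s)
  have hfIoi : MemLp f 2 (volume.restrict (Ioi b)) :=
    hf.mono_measure (Measure.restrict_mono Ioi_subset_Ici_self le_rfl)
  have hU : Continuous fun s : ℝ => expIA A (b - s) :=
    (continuous_expIA A).comp (continuous_const.sub continuous_id)
  have hmeas : AEStronglyMeasurable F (volume.restrict (Ioi b)) :=
    (by fun_prop : Continuous fun s : ℝ => Complex.exp (-Complex.I * lam * ((b : ℂ) - (s : ℂ))))
      |>.aestronglyMeasurable.smul
      ((ContinuousLinearMap.id ℂ _).aestronglyMeasurable_comp₂ hU.aestronglyMeasurable hfIoi.1)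
  have hnorm (s : ℝ) : ‖F s‖ = Real.exp (lam.im * (b - s)) * ‖f s‖ := by
    rw [norm_smul, norm_exp_neg_I_mul_sub, hA.norm_expIA_apply]
  obtain ⟨hint, hbound⟩ := integrable_and_sq_norm_integral_le_of_norm_le_mul hmeas
    (memLp_two_exp_mul_sub_Ioi hlam b) hfIoi.norm (ae_of_all _ fun s => (hnorm s).le)
  exact ⟨hint, hbound.trans_eq (by rw [integral_exp_mul_sub_sq_Ioi hlam])⟩
end
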